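/- Let D ∈ 𝒟′_n and let D⁻ be D with the edge (v_n,v_t) deleted, where 3 ≤ t ≤ n−1 is the largest index such that (v_n,v_t) ∈ E(D). Then the principal ratios satisfy γ(D⁻) > γ(D). -/

import Mathlib

namespace PR

/-- Out-degree of `u` in the digraph on vertex set `{1,…,n} ⊆ ℕ` with adjacency `E`. -/
def outDeg (n : ℕ) (E : ℕ → ℕ → Bool) (u : ℕ) : ℕ :=
  ((Finset.Icc 1 n).filter (fun v => E u v)).card

/-- In-degree of `u`. -/
def inDeg (n : ℕ) (E : ℕ → ℕ → Bool) (u : ℕ) : ℕ :=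
  ((Finset.Icc 1 n).filter (fun v => E v u)).card

/-- `E` is a simple digraph on the vertex set `{1,…,n}`: all edges join distinct
vertices of `{1,…,n}` (no loops; the `Bool`-valued adjacency precludes multi-edges). -/
def IsDigraph (n : ℕ) (E : ℕ → ℕ → Bool) : Prop :=
  ∀ u v, E u v = true → u ∈ Finset.Icc 1 n ∧ v ∈ Finset.Icc 1 n ∧ u ≠ v

/-- `WalkLen E k u v` : there is a directed walk of length `k` from `u` to `v`. -/
def WalkLen (E : ℕ → ℕ → Bool) : ℕ → ℕ → ℕ → Prop
  | 0, u, v => u = v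
  | (k+1), u, v => ∃ w, E u w = true ∧ WalkLen E k w v

/-- Every vertex reaches every other vertex by a directed walk. -/
def StronglyConnected (n : ℕ) (E : ℕ → ℕ → Bool) : Prop :=
  ∀ u ∈ Finset.Icc 1 n, ∀ v ∈ Finset.Icc 1 n, ∃ k, WalkLen E k u v

/-- Directed distance: number of edges in a shortest directed path from `u` to `v`. -/
noncomputable def dist (E : ℕ → ℕ → Bool) (u v : ℕ) : ℕ :=
  sInf {k | WalkLen E k u v}

/-- Distance between two sets of vertices. -/
noncomputable def setDist (E : ℕ → ℕ → Bool) (A B : Set ℕ) : ℕ :=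
  sInf {k | ∃ a ∈ A, ∃ b ∈ B, dist E a b = k}

/-- `φ` is the Perron vector of the simple random walk on the digraph: a positive
probability distribution on `{1,…,n}` which is stationary, i.e. `φ P = φ` where
`P(u,v) = 1/d⁺(u)` for edges `(u,v)` and `0` otherwise. -/
def IsPerron (n : ℕ) (E : ℕ → ℕ → Bool) (φ : ℕ → ℝ) : Prop :=
  (∀ v ∈ Finset.Icc 1 n, 0 < φ v) ∧
  (∑ v ∈ Finset.Icc 1 n, φ v = 1) ∧
  (∀ v ∈ Finset.Icc 1 n, φ v =
    ∑ u ∈ Finset.Icc 1 n, if E u v then φ u / (outDeg n E u : ℝ) else 0)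

/-- The principal ratio `γ = (max_u φ(u)) / (min_u φ(u))` of a vector `φ` on `{1,…,n}`. -/
noncomputable def pratio (n : ℕ) (φ : ℕ → ℝ) : ℝ :=
  if h : (Finset.Icc 1 n).Nonempty then
    ((Finset.Icc 1 n).sup' h φ) / ((Finset.Icc 1 n).inf' h φ)
  else 0

/-- Vertices attaining the maximum of `φ`. -/
def Vmax (n : ℕ) (φ : ℕ → ℝ) : Set ℕ :=
  {v | v ∈ Finset.Icc 1 n ∧ ∀ u ∈ Finset.Icc 1 n, φ u ≤ φ v}

/-- Vertices attaining the minimum of `φ`. -/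
def Vmin (n : ℕ) (φ : ℕ → ℝ) : Set ℕ :=
  {v | v ∈ Finset.Icc 1 n ∧ ∀ u ∈ Finset.Icc 1 n, φ v ≤ φ u}

/-- Membership in the family `𝒟′_n` (together with the Perron vector `φ` of `D`). -/
def memDn' (n : ℕ) (E : ℕ → ℕ → Bool) (φ : ℕ → ℝ) : Prop :=
  IsDigraph n E ∧ StronglyConnected n E ∧ IsPerron n E φ ∧
  -- (i) v_1, v_2, …, v_n is a shortest directed path from v_1 to v_n, of length n-1
  (∀ i, 1 ≤ i → i < n → E i (i+1) = true) ∧ dist E 1 n = n - 1 ∧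
  -- (ii) d⁺(v_i) = i for every 2 ≤ i ≤ n-1
  (∀ i, 2 ≤ i → i ≤ n - 1 → outDeg n E i = i) ∧
  -- (iii) v_2 ∈ V_max, v_n ∈ V_min, dist(V_max,V_min) = dist(v_2,v_n) = n-2
  (2:ℕ) ∈ Vmax n φ ∧ n ∈ Vmin n φ ∧
  setDist E (Vmax n φ) (Vmin n φ) = n - 2 ∧ dist E 2 n = n - 2 ∧
  -- (iv) d⁺(v_n) ≥ 2
  2 ≤ outDeg n E n ∧
  -- (v) N⁺(v_n) ≠ {v_1, v_2}
  ¬ (∀ v, E n v = true ↔ (v = 1 ∨ v = 2))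

/-!
Conditions (i)–(ii) force the shape of `D`: `v₁` points only to `v₂`, and each `v_i` with
`2 ≤ i ≤ n - 1` points to every `v_j` with `j ≤ i + 1`, `j ≠ i`; only `S = N⁺(v_n)` is free.
The stationarity equations at `v₃, …, v_n` then become a second-order backward recurrence for the
tail sums `T v = ∑_{v ≤ i ≤ n-1} φ(v_i) / i`, with a source term `φ(v_n) / |S|` at every vertex of
`S`. Solving it by superposition gives
  `φ(v₂) / φ(v_n) = w(n) - (1 / |S|) ∑_{s ∈ S} w(s)`
for an explicit weight `w` that is monotone, and strictly increasing from `2` on. Removing `t`,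
the strictly heaviest element of `S`, lowers the average, so `φ(v₂) / φ(v_n)` grows; it equals
`γ(D)` before the deletion and is a lower bound for `γ(D⁻)` after it.
-/
open Finset

/-- `tailCoeff s (s - v)` is the contribution of a unit source at `v_s` to the tail sum at `v`
(`IsStaircase.tailSum_eq`); since `φ(v₂) = 2 (T 2 - T 3)`, `weight s` is its contribution to
`φ(v₂)`. -/
noncomputable def tailCoeff (m : ℕ) : ℕ → ℝ
  | 0 => 0
  | 1 => 1
  | (k + 2) => ((m : ℝ) - k) * (tailCoeff m (k + 1) - tailCoeff m k)

theorem tailCoeff_succ_succ_eq_descFactorial_add {m k : ℕ} (hk : k ≤ m) :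
    tailCoeff (m + 1) (k + 1) = m.descFactorial k + tailCoeff m k := by
  induction k using Nat.strong_induction_on with
  | _ k ih =>
    match k, hk with
    | 0, _ => simp [tailCoeff]
    | 1, _ => simp [tailCoeff]
    | k + 2, hk =>
      have hsucc : ∀ j, j < m → (m.descFactorial (j + 1) : ℝ) = ((m : ℝ) - j) * m.descFactorial j :=
        fun j hj => by rw [Nat.descFactorial_succ, Nat.cast_mul, Nat.cast_sub hj.le]
      rw [tailCoeff, ih (k + 1) (by omega) (by omega), ih k (by omega) (by omega), tailCoeff,
        hsucc (k + 1) (by omega), hsucc k (by omega)]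
      push_cast
      ring

theorem tailCoeff_sub_pred (s : ℕ) {v : ℕ} (hv : 1 ≤ v) :
    tailCoeff s (s - (v - 1)) =
      (v + 1) * (tailCoeff s (s - v) - tailCoeff s (s - (v + 1))) + if s = v then 1 else 0 := by
  rcases lt_trichotomy s v with hsv | rfl | hvs
  · rw [show s - (v - 1) = 0 by omega, show s - v = 0 by omega, show s - (v + 1) = 0 by omega,
      if_neg hsv.ne]
    simp [tailCoeff]
  · rw [show s - (s - 1) = 1 by omega, Nat.sub_self, show s - (s + 1) = 0 by omega]
    simp [tailCoeff]
  · obtain ⟨k, rfl⟩ : ∃ k, s = v + 1 + k := ⟨s - v - 1, by omega⟩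
    rw [show v + 1 + k - (v - 1) = k + 2 by omega, show v + 1 + k - v = k + 1 by omega,
      show v + 1 + k - (v + 1) = k by omega, if_neg (by omega), tailCoeff]
    push_cast
    ring

noncomputable def weight (m : ℕ) : ℝ := 2 * (tailCoeff m (m - 2) - tailCoeff m (m - 3))

theorem weight_lt_weight_succ {m : ℕ} (hm : 2 ≤ m) : weight m < weight (m + 1) := by
  obtain rfl | hm := hm.eq_or_lt
  · norm_num [weight, tailCoeff]
  have hdesc : m.descFactorial (m - 2) = 3 * m.descFactorial (m - 3) := by
    rw [show m - 2 = m - 3 + 1 by omega, Nat.descFactorial_succ, show m - (m - 3) = 3 by omega]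
  have hpos : 0 < m.descFactorial (m - 3) := Nat.descFactorial_pos.mpr (by omega)
  have hstep : weight (m + 1) = weight m + 4 * m.descFactorial (m - 3) := by
    rw [weight, weight, show m + 1 - 2 = m - 2 + 1 by omega, show m + 1 - 3 = m - 3 + 1 by omega,
      tailCoeff_succ_succ_eq_descFactorial_add (by omega),
      tailCoeff_succ_succ_eq_descFactorial_add (by omega), hdesc]
    push_cast
    ring
  rw [hstep]
  have : (0 : ℝ) < m.descFactorial (m - 3) := by exact_mod_cast hpos
  linarith

theorem monotone_weight : Monotone weight := by
  refine monotone_nat_of_le_succ fun m => ?_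
  rcases Nat.lt_or_ge m 2 with hm | hm
  · interval_cases m <;> norm_num [weight, tailCoeff]
  · exact (weight_lt_weight_succ hm).le

theorem weight_lt_weight {s t : ℕ} (hst : s < t) (ht : 3 ≤ t) : weight s < weight t := by
  have hlt := weight_lt_weight_succ (m := t - 1) (by omega)
  rw [Nat.sub_add_cancel (by omega)] at hlt
  exact (monotone_weight (by omega : s ≤ t - 1)).trans_lt hlt

theorem eq_of_backward_recurrence {α : Type*} {f g : ℕ → α} (F : ℕ → α → α → α) {m n : ℕ}
    (hn : f n = g n) (hn' : f (n - 1) = g (n - 1))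
    (hf : ∀ v, m < v → v < n → f (v - 1) = F v (f v) (f (v + 1)))
    (hg : ∀ v, m < v → v < n → g (v - 1) = F v (g v) (g (v + 1)))
    {v : ℕ} (hmv : m ≤ v) (hvn : v ≤ n) : f v = g v := by
  induction h : n - v using Nat.strong_induction_on generalizing v with
  | _ k ih =>
    rcases (show v = n ∨ v = n - 1 ∨ v + 1 < n by omega) with rfl | rfl | hlt
    · exact hn
    · exact hn'
    · have hfv := hf (v + 1) (by omega) hlt
      have hgv := hg (v + 1) (by omega) hlt
      rw [Nat.add_sub_cancel] at hfv hgv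
      rw [hfv, hgv, ih (n - (v + 1)) (by omega) (by omega) (by omega) rfl,
        ih (n - (v + 1 + 1)) (by omega) (by omega) (by omega) rfl]

theorem WalkLen.append {E : ℕ → ℕ → Bool} {k l u v w : ℕ} (h₁ : WalkLen E k u v)
    (h₂ : WalkLen E l v w) : WalkLen E (k + l) u w := by
  induction k generalizing u with
  | zero => cases h₁; simpa using h₂
  | succ k ih =>
    obtain ⟨x, hux, hx⟩ := h₁
    rw [Nat.add_right_comm]
    exact ⟨x, hux, ih hx⟩

theorem walkLen_of_path {n : ℕ} {E : ℕ → ℕ → Bool}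
    (hpath : ∀ i, 1 ≤ i → i < n → E i (i + 1) = true) {i j : ℕ} (hi : 1 ≤ i) (hij : i ≤ j)
    (hj : j ≤ n) : WalkLen E (j - i) i j := by
  induction j, hij using Nat.le_induction with
  | base => simp [WalkLen]
  | succ j hij ih =>
    rw [Nat.sub_add_comm hij]
    have hstep : WalkLen E 1 j (j + 1) := ⟨j + 1, hpath j (by omega) (by omega), rfl⟩
    exact (ih (by omega)).append hstep

theorem dist_le_of_walkLen {E : ℕ → ℕ → Bool} {k u v : ℕ} (h : WalkLen E k u v) :
    dist E u v ≤ k :=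
  Nat.sInf_le h

theorem le_succ_of_edge_of_dist_eq {n : ℕ} {E : ℕ → ℕ → Bool}
    (hpath : ∀ i, 1 ≤ i → i < n → E i (i + 1) = true) (hdist : dist E 1 n = n - 1)
    {u j : ℕ} (hu : 1 ≤ u) (hj : j ≤ n) (hE : E u j = true) : j ≤ u + 1 := by
  by_contra! hlt
  have hwalk : WalkLen E ((u - 1) + (1 + (n - j))) 1 n :=
    (walkLen_of_path hpath le_rfl hu (by omega)).append
      ((show WalkLen E 1 u j from ⟨j, hE, rfl⟩).append (walkLen_of_path hpath (by omega) hj le_rfl))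
  have := dist_le_of_walkLen hwalk
  omega

def outNbrs (n : ℕ) (E : ℕ → ℕ → Bool) (u : ℕ) : Finset ℕ := (Icc 1 n).filter (fun v => E u v)

theorem outDeg_eq_card_outNbrs (n : ℕ) (E : ℕ → ℕ → Bool) (u : ℕ) :
    outDeg n E u = (outNbrs n E u).card := rfl

theorem outNbrs_deleteEdge (n t : ℕ) (E : ℕ → ℕ → Bool) :
    outNbrs n (fun u v => E u v && !(u == n && v == t)) n = (outNbrs n E n).erase t := by
  ext s
  simp only [outNbrs, mem_filter, mem_erase, beq_self_eq_true, Bool.true_and, Bool.and_eq_true,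
    Bool.not_eq_true', beq_eq_false_iff_ne]
  tauto

structure IsStaircase (n : ℕ) (E : ℕ → ℕ → Bool) : Prop where
  adj_one : ∀ j, E 1 j = true ↔ j = 2
  adj_mid : ∀ i, 2 ≤ i → i ≤ n - 1 → ∀ j, E i j = true ↔ 1 ≤ j ∧ j ≤ i + 1 ∧ j ≠ i
  adj_last : ∀ j, E n j = true → 1 ≤ j ∧ j ≤ n - 1

theorem isStaircase_of_memDn' {n : ℕ} {E : ℕ → ℕ → Bool} {φ : ℕ → ℝ} (hD : memDn' n E φ)
    (hn : 2 ≤ n) : IsStaircase n E := by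
  obtain ⟨hdig, -, -, hpath, hdist, hdeg, -⟩ := hD
  have hforward {u j : ℕ} (hu : 1 ≤ u) (hE : E u j = true) : j ≤ u + 1 :=
    le_succ_of_edge_of_dist_eq hpath hdist hu (mem_Icc.mp (hdig u j hE).2.1).2 hE
  refine ⟨fun j => ⟨fun hE => ?_, ?_⟩, fun i hi2 hin => ?_, fun j hE => ?_⟩
  · have := hdig 1 j hE
    have := hforward le_rfl hE
    simp only [mem_Icc] at *
    omega
  · rintro rfl
    exact hpath 1 le_rfl (by omega)
  · have hsub : outNbrs n E i ⊆ (Icc 1 (i + 1)).erase i := fun j hj => by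
      obtain ⟨hj, hE⟩ := mem_filter.mp hj
      have := (hdig i j hE).2.2
      have := hforward (by omega) hE
      simp only [mem_erase, mem_Icc] at hj ⊢
      omega
    have hcard : ((Icc 1 (i + 1)).erase i).card ≤ (outNbrs n E i).card := by
      rw [card_erase_of_mem (by simp; omega), Nat.card_Icc, ← outDeg_eq_card_outNbrs,
        hdeg i hi2 hin]
      omega
    intro j
    have hmem := Finset.ext_iff.mp (eq_of_subset_of_card_le hsub hcard) j
    simp only [outNbrs, mem_filter, mem_erase, mem_Icc] at hmem
    constructor
    · intro hE
      have := hmem.mp ⟨mem_Icc.mp (hdig i j hE).2.1, hE⟩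
      omega
    · intro hj
      exact (hmem.mpr (by omega)).2
  · have := hdig n j hE
    simp only [mem_Icc] at this
    omega

noncomputable def tailSum (n : ℕ) (φ : ℕ → ℝ) (v : ℕ) : ℝ := ∑ i ∈ Icc v (n - 1), φ i / i

theorem tailSum_eq_add {n : ℕ} (φ : ℕ → ℝ) {v : ℕ} (hv : v ≤ n - 1) :
    tailSum n φ v = φ v / v + tailSum n φ (v + 1) := by
  rw [tailSum, ← insert_Icc_add_one_left_eq_Icc hv, sum_insert (by simp), tailSum]

theorem tailSum_eq_zero {n : ℕ} (φ : ℕ → ℝ) {v : ℕ} (hv : n - 1 < v) : tailSum n φ v = 0 := by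
  rw [tailSum, Icc_eq_empty (by omega), sum_empty]

namespace IsStaircase

variable {n : ℕ} {E : ℕ → ℕ → Bool} {φ : ℕ → ℝ}

theorem deleteEdge (hE : IsStaircase n E) (hn : 2 ≤ n) (t : ℕ) :
    IsStaircase n (fun u v => E u v && !(u == n && v == t)) := by
  have hkeep {u : ℕ} (hu : u ≠ n) (v : ℕ) : (E u v && !(u == n && v == t)) = E u v := by
    simp [hu]
  refine ⟨fun j => ?_, fun i hi2 hin j => ?_, fun j hj => hE.adj_last j ?_⟩
  · rw [hkeep (by omega)]; exact hE.adj_one j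
  · rw [hkeep (by omega)]; exact hE.adj_mid i hi2 hin j
  · simp only [Bool.and_eq_true] at hj
    exact hj.1

theorem outDeg_mid (hE : IsStaircase n E) {i : ℕ} (hi2 : 2 ≤ i) (hin : i ≤ n - 1) :
    outDeg n E i = i := by
  have : outNbrs n E i = (Icc 1 (i + 1)).erase i := by
    ext j
    simp only [outNbrs, mem_filter, mem_erase, mem_Icc, hE.adj_mid i hi2 hin j]
    omega
  rw [outDeg_eq_card_outNbrs, this, card_erase_of_mem (by simp; omega), Nat.card_Icc]
  omega

theorem perron_eq_inflow (hE : IsStaircase n E) (hφ : IsPerron n E φ) {v : ℕ} (hv3 : 3 ≤ v)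
    (hvn : v ≤ n) :
    φ v = φ (v - 1) / (v - 1 : ℕ) + tailSum n φ (v + 1)
      + if E n v then φ n / outDeg n E n else 0 := by
  set c := if E n v then φ n / outDeg n E n else 0
  have hterm : ∀ u ∈ Icc 1 n, (if E u v then φ u / outDeg n E u else 0) =
      (if u = v - 1 then φ (v - 1) / (v - 1 : ℕ) else 0)
        + (if u ∈ Icc (v + 1) (n - 1) then φ u / u else 0) + (if u = n then c else 0) := by
    intro u hu
    rw [mem_Icc] at hu
    rcases (show u = 1 ∨ 2 ≤ u ∧ u ≤ n - 1 ∨ u = n by omega) with rfl | hmid | rfl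
    · have : E 1 v = false := by
        rw [Bool.eq_false_iff, ne_eq, hE.adj_one v]
        omega
      simp only [this, mem_Icc]
      split_ifs <;> first | omega | contradiction | simp
    · simp only [hE.adj_mid u hmid.1 hmid.2 v, hE.outDeg_mid hmid.1 hmid.2, mem_Icc]
      split_ifs <;> first | omega | (subst_vars; ring)
    · simp only [c, mem_Icc, if_true]
      split_ifs <;> first | omega | contradiction | simp
  have hinter : Icc 1 n ∩ Icc (v + 1) (n - 1) = Icc (v + 1) (n - 1) :=
    inter_eq_right.mpr fun j hj => by simp only [mem_Icc] at hj ⊢; omega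
  rw [hφ.2.2 v (by simp; omega), sum_congr rfl hterm, sum_add_distrib, sum_add_distrib,
    sum_ite_eq', if_pos (by simp; omega), sum_ite_mem, hinter, sum_ite_eq', if_pos (by simp; omega),
    tailSum]

theorem tailSum_pred (hE : IsStaircase n E) (hφ : IsPerron n E φ) {v : ℕ} (hv3 : 3 ≤ v)
    (hvn : v ≤ n - 1) :
    tailSum n φ (v - 1) = (v + 1) * (tailSum n φ v - tailSum n φ (v + 1))
      - if E n v then φ n / outDeg n E n else 0 := by
  have hprev := tailSum_eq_add (n := n) φ (v := v - 1) (by omega)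
  rw [Nat.sub_add_cancel (by omega)] at hprev
  have hv : (v : ℝ) ≠ 0 := Nat.cast_ne_zero.mpr (by omega)
  have hφv : φ v = v * (tailSum n φ v - tailSum n φ (v + 1)) := by
    rw [tailSum_eq_add φ hvn]
    field_simp
    ring
  linear_combination hprev - hE.perron_eq_inflow hφ hv3 (by omega) + hφv

theorem tailSum_last (hE : IsStaircase n E) (hφ : IsPerron n E φ) (hn : 3 ≤ n) :
    tailSum n φ (n - 1) = φ n := by
  have hnn : E n n = false := by
    rw [Bool.eq_false_iff]
    intro h
    have := hE.adj_last n h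
    omega
  rw [hE.perron_eq_inflow hφ hn le_rfl, tailSum_eq_add φ le_rfl, Nat.sub_add_cancel (by omega),
    tailSum_eq_zero φ (v := n) (by omega), tailSum_eq_zero φ (v := n + 1) (by omega), hnn]
  simp

theorem tailSum_eq (hE : IsStaircase n E) (hφ : IsPerron n E φ) (hn : 3 ≤ n) {v : ℕ}
    (hv2 : 2 ≤ v) (hvn : v ≤ n) :
    tailSum n φ v = φ n * tailCoeff n (n - v)
      - φ n / outDeg n E n * ∑ s ∈ outNbrs n E n, tailCoeff s (s - v) := by
  have hS : ∀ s ∈ outNbrs n E n, 1 ≤ s ∧ s ≤ n - 1 := fun s hs =>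
    hE.adj_last s (mem_filter.mp hs).2
  have hvanish : ∀ w, n - 1 ≤ w → ∑ s ∈ outNbrs n E n, tailCoeff s (s - w) = 0 := fun w hw =>
    sum_eq_zero fun s hs => by rw [show s - w = 0 by have := hS s hs; omega]; rfl
  refine eq_of_backward_recurrence (f := tailSum n φ) (m := 2)
    (g := fun w => φ n * tailCoeff n (n - w)
      - φ n / outDeg n E n * ∑ s ∈ outNbrs n E n, tailCoeff s (s - w))
    (fun w x y => (w + 1) * (x - y) - if E n w then φ n / outDeg n E n else 0) ?_ ?_
    (fun w hw hwn => hE.tailSum_pred hφ hw (by omega)) (fun w hw hwn => ?_) hv2 hvn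
  · rw [tailSum_eq_zero φ (by omega), Nat.sub_self, hvanish n (by omega)]
    simp [tailCoeff]
  · rw [hE.tailSum_last hφ hn, show n - (n - 1) = 1 by omega, hvanish (n - 1) le_rfl]
    simp [tailCoeff]
  · have hind : ∑ s ∈ outNbrs n E n, (if s = w then (1 : ℝ) else 0) = if E n w then 1 else 0 := by
      simp only [sum_ite_eq', outNbrs, mem_filter, mem_Icc, show 1 ≤ w ∧ w ≤ n by omega,
        true_and]
    simp only [tailCoeff_sub_pred _ (show 1 ≤ w by omega), if_neg (show n ≠ w by omega),
      sum_add_distrib, ← mul_sum, sum_sub_distrib, hind]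
    split_ifs <;> ring

theorem perron_two_div_last (hE : IsStaircase n E) (hφ : IsPerron n E φ) (hn : 3 ≤ n) :
    φ 2 / φ n = weight n - (∑ s ∈ outNbrs n E n, weight s) / outDeg n E n := by
  have h2 := tailSum_eq_add (n := n) φ (v := 2) (by omega)
  rw [hE.tailSum_eq hφ hn le_rfl (by omega), hE.tailSum_eq hφ hn (by omega) (by omega)] at h2
  rw [div_eq_iff (hφ.1 n (by simp; omega)).ne']
  simp only [weight, ← mul_sum, sum_sub_distrib]
  linear_combination -2 * h2

end IsStaircase

theorem sum_erase_div_card_lt {ι K : Type*} [DecidableEq ι] [Field K] [LinearOrder K]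
    [IsStrictOrderedRing K] {s : Finset ι} {f : ι → K} {t : ι} (ht : t ∈ s)
    (hne : (s.erase t).Nonempty) (hlt : ∀ i ∈ s.erase t, f i < f t) :
    (∑ i ∈ s.erase t, f i) / (s.erase t).card < (∑ i ∈ s, f i) / s.card := by
  have hsum : ∑ i ∈ s.erase t, f i < (s.erase t).card * f t := by
    simpa using sum_lt_sum_of_nonempty hne hlt
  have hk : (0 : K) < (s.erase t).card := by exact_mod_cast hne.card_pos
  rw [← sum_erase_add s f ht, ← card_erase_add_one ht, Nat.cast_add_one,
    div_lt_div_iff₀ hk (by positivity)]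
  nlinarith

theorem pratio_eq_div {n : ℕ} {φ : ℕ → ℝ} {a b : ℕ} (ha : a ∈ Vmax n φ) (hb : b ∈ Vmin n φ) :
    pratio n φ = φ a / φ b := by
  have hne : (Icc 1 n).Nonempty := ⟨a, ha.1⟩
  rw [pratio, dif_pos hne, le_antisymm (sup'_le _ _ ha.2) (le_sup' φ ha.1),
    le_antisymm (inf'_le φ hb.1) (le_inf' _ _ hb.2)]

theorem div_le_pratio {n : ℕ} {φ : ℕ → ℝ} (hφ : ∀ v ∈ Icc 1 n, 0 < φ v) {a b : ℕ}
    (ha : a ∈ Icc 1 n) (hb : b ∈ Icc 1 n) : φ a / φ b ≤ pratio n φ := by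
  have hne : (Icc 1 n).Nonempty := ⟨a, ha⟩
  obtain ⟨m, hm, hmin⟩ := exists_mem_eq_inf' hne φ
  rw [pratio, dif_pos hne]
  exact div_le_div₀ ((hφ a ha).le.trans (le_sup' φ ha)) (le_sup' φ ha) (hmin ▸ hφ m hm)
    (inf'_le φ hb)

/-- Deleting the edge `(v_n,v_t)` from `D ∈ 𝒟′_n` strictly increases the
principal ratio: `γ(D⁻) > γ(D)`. -/
theorem stmt13 (n t : ℕ) (E : ℕ → ℕ → Bool) (φ ψ : ℕ → ℝ)
    (hD : memDn' n E φ)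
    (ht3 : 3 ≤ t) (htn : t ≤ n - 1) (hedge : E n t = true)
    (htmax : ∀ t', t < t' → t' ≤ n - 1 → E n t' = false)
    (hψ : IsPerron n (fun u v => E u v && !(u == n && v == t)) ψ) :
    pratio n ψ > pratio n φ := by
  have hE := isStaircase_of_memDn' hD (by omega)
  obtain ⟨-, -, hφ, -, -, -, hmax, hmin, -, -, hdeg_last, -⟩ := hD
  have ht : t ∈ outNbrs n E n := mem_filter.mpr ⟨by simp; omega, hedge⟩
  have hne : ((outNbrs n E n).erase t).Nonempty := by
    rw [← card_pos, card_erase_of_mem ht, ← outDeg_eq_card_outNbrs]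
    omega
  have hlt : ∀ s ∈ (outNbrs n E n).erase t, weight s < weight t := fun s hs => by
    obtain ⟨hst, hs⟩ := mem_erase.mp hs
    have hEs := (mem_filter.mp hs).2
    refine weight_lt_weight (lt_of_le_of_ne (not_lt.mp fun hts => ?_) hst) ht3
    simp [htmax s hts (hE.adj_last s hEs).2] at hEs
  calc pratio n φ = φ 2 / φ n := pratio_eq_div hmax hmin
    _ = weight n - (∑ s ∈ outNbrs n E n, weight s) / (outNbrs n E n).card :=
      hE.perron_two_div_last hφ (by omega)
    _ < weight n - (∑ s ∈ (outNbrs n E n).erase t, weight s) / ((outNbrs n E n).erase t).card :=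
      sub_lt_sub_left (sum_erase_div_card_lt ht hne hlt) _
    _ = ψ 2 / ψ n := by
      rw [(hE.deleteEdge (by omega) t).perron_two_div_last hψ (by omega), outDeg_eq_card_outNbrs,
        outNbrs_deleteEdge]
    _ ≤ pratio n ψ := div_le_pratio hψ.1 (by simp; omega) (by simp; omega)

end PR
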